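/- If a ∈ 𝒮(ℝ^d×ℝ^d, ℂ^{n×n}) is a matrix-valued Schwartz symbol, then the L²-adjoint of op[a] is op[g], where g is determined by ℱ₁g(η,ξ) = (ℱ₁a(−η, η+ξ))* (conjugate transpose), i.e. ⟨op[a]f₁, f₂⟩_{L²} = ⟨f₁, op[g]f₂⟩_{L²} for all f₁,f₂ ∈ 𝒮(ℝ^d,ℂⁿ). -/

import Mathlib

open MeasureTheory

noncomputable section

/-- `ℝ^d` as a Euclidean space. -/
abbrev Rd (d : ℕ) : Type := EuclideanSpace ℝ (Fin d)

/-- `ℂ^n` as a Euclidean space. -/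
abbrev Cn (n : ℕ) : Type := EuclideanSpace ℂ (Fin n)

/-- Complex `n×n` matrices, realized as continuous linear operators on `ℂ^n`. -/
abbrev MatL (n : ℕ) : Type := Cn n →L[ℂ] Cn n

/-- The Japanese bracket `⟨ξ⟩ = (1+|ξ|²)^{1/2}`. -/
def jap {d : ℕ} (ξ : Rd d) : ℝ := (1 + ‖ξ‖ ^ 2) ^ ((1 : ℝ) / 2)

section Derivatives

variable {p q : ℕ} {E : Type*} [NormedAddCommGroup E] [NormedSpace ℝ E]

/-- Partial derivative in the first variable, in coordinate direction `i`. -/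
def pd1 (i : Fin p) (a : Rd p → Rd q → E) : Rd p → Rd q → E :=
  fun x ξ => fderiv ℝ (fun y => a y ξ) x (EuclideanSpace.single i (1 : ℝ))

/-- Partial derivative in the second variable, in coordinate direction `i`. -/
def pd2 (i : Fin q) (a : Rd p → Rd q → E) : Rd p → Rd q → E :=
  fun x ξ => fderiv ℝ (fun ζ => a x ζ) ξ (EuclideanSpace.single i (1 : ℝ))

/-- Iterated partial derivatives in the first variable. -/
def md1 : List (Fin p) → (Rd p → Rd q → E) → (Rd p → Rd q → E)
  | [] => fun a => a
  | i :: l => fun a => md1 l (pd1 i a)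

/-- Iterated partial derivatives in the second variable. -/
def md2 : List (Fin q) → (Rd p → Rd q → E) → (Rd p → Rd q → E)
  | [] => fun a => a
  | i :: l => fun a => md2 l (pd2 i a)

/-- Iterated mixed partial derivative `∂_x^{l1} ∂_ξ^{l2} a`. -/
def mderiv (l1 : List (Fin p)) (l2 : List (Fin q)) (a : Rd p → Rd q → E) : Rd p → Rd q → E :=
  md1 l1 (md2 l2 a)

end Derivatives

section Fourier

variable {d n : ℕ}

/-- Fourier transform `(ℱf)(ξ) = (2π)^{-d/2} ∫ f(x) e^{-ixξ} dx` of `f : ℝ^d → ℂ^n`. -/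
def FT (f : Rd d → Cn n) (ξ : Rd d) : Cn n :=
  ((2 * Real.pi) ^ (-(d : ℝ) / 2)) •
    ∫ x : Rd d, Complex.exp (-Complex.I * ((inner ℝ x ξ : ℝ) : ℂ)) • f x

/-- Fourier transform in the first variable of a symbol with values in a complex normed space. -/
def FT1 {E : Type*} [NormedAddCommGroup E] [NormedSpace ℂ E]
    (a : Rd d → Rd d → E) (η ξ : Rd d) : E :=
  ((2 * Real.pi) ^ (-(d : ℝ) / 2)) •
    ∫ x : Rd d, Complex.exp (-Complex.I * ((inner ℝ x η : ℝ) : ℂ)) • a x ξ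

/-- The pseudo-differential operator `op[a]` with symbol `a`. -/
def op (a : Rd d → Rd d → MatL n) (f : Rd d → Cn n) (x : Rd d) : Cn n :=
  ((2 * Real.pi) ^ (-(d : ℝ) / 2)) •
    ∫ ξ : Rd d, Complex.exp (Complex.I * ((inner ℝ x ξ : ℝ) : ℂ)) • (a x ξ) (FT f ξ)

/-- The `H^s`-norm `‖f‖_s = ‖⟨·⟩^s ℱf‖_{L²}`. -/
def Hnorm (s : ℝ) (f : Rd d → Cn n) : ℝ :=
  (∫ ξ : Rd d, jap ξ ^ (2 * s) * ‖FT f ξ‖ ^ 2) ^ ((1 : ℝ) / 2)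

/-- Membership in the Sobolev space `H^s`. -/
def MemH (s : ℝ) (f : Rd d → Cn n) : Prop :=
  Integrable (fun ξ : Rd d => jap ξ ^ (2 * s) * ‖FT f ξ‖ ^ 2)

/-- The `L¹`-norm. -/
def L1norm (f : Rd d → Cn n) : ℝ := ∫ x : Rd d, ‖f x‖

/-- The `L²` inner product (conjugate-linear in the first argument). -/
def L2inner (f g : Rd d → Cn n) : ℂ := ∫ x : Rd d, (inner ℂ (f x) (g x) : ℂ)

/-- `T` maps `H^{l+m}` into `H^l` with operator norm at most `C` (tested on Schwartz functions). -/
def OpBddBy (l m C : ℝ) (T : (Rd d → Cn n) → Rd d → Cn n) : Prop :=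
  ∀ f : SchwartzMap (Rd d) (Cn n), Hnorm l (T ⇑f) ≤ C * Hnorm (l + m) ⇑f

/-- `T` is infinitely smoothing: it maps `H^s` to `H^l` boundedly for all `s, l`. -/
def InfSmoothing (T : (Rd d → Cn n) → Rd d → Cn n) : Prop :=
  ∀ s l : ℝ, ∃ C : ℝ, ∀ f : SchwartzMap (Rd d) (Cn n), Hnorm l (T ⇑f) ≤ C * Hnorm s ⇑f

end Fourier
section SymbolClasses

variable {d n : ℕ}

/-- The symbol class `S^m_{1,1}`. -/
def IsS11 (m : ℝ) (a : Rd d → Rd d → MatL n) : Prop :=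
  ContDiff ℝ (⊤ : ℕ∞) (fun P : Rd d × Rd d => a P.1 P.2) ∧
  ∀ lx lξ : List (Fin d), ∃ C : ℝ, ∀ x ξ : Rd d,
    ‖mderiv lx lξ a x ξ‖ ≤ C * jap ξ ^ (m - (lξ.length : ℝ) + (lx.length : ℝ))

/-- All `S^m_{1,1}`-seminorms of order at most `N` of `a` are bounded by `r`. -/
def S11BddBy (m : ℝ) (N : ℕ) (r : ℝ) (a : Rd d → Rd d → MatL n) : Prop :=
  ∀ lx lξ : List (Fin d), lx.length ≤ N → lξ.length ≤ N → ∀ x ξ : Rd d,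
    ‖mderiv lx lξ a x ξ‖ ≤ r * jap ξ ^ (m - (lξ.length : ℝ) + (lx.length : ℝ))

/-- The Hörmander symbol class `S^m`. -/
def IsSm (m : ℝ) (a : Rd d → Rd d → MatL n) : Prop :=
  ContDiff ℝ (⊤ : ℕ∞) (fun P : Rd d × Rd d => a P.1 P.2) ∧
  ∀ lx lξ : List (Fin d), ∃ C : ℝ, ∀ x ξ : Rd d,
    ‖mderiv lx lξ a x ξ‖ ≤ C * jap ξ ^ (m - (lξ.length : ℝ))

/-- The region `N_L = {(η,ξ) : |η+ξ|+1 < L|ξ|}`. -/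
def NLset (d : ℕ) (L : ℝ) : Set (Rd d × Rd d) := {P | ‖P.1 + P.2‖ + 1 < L * ‖P.2‖}

/-- `ℱ₁a` vanishes on `N_L` in the sense of distributions. -/
def FT1VanishesOn (L : ℝ) (a : Rd d → Rd d → MatL n) : Prop :=
  ∀ φ : SchwartzMap (Rd d × Rd d) ℂ, tsupport ⇑φ ⊆ NLset d L →
    (∫ x : Rd d, ∫ ξ : Rd d, FT1 (fun η ζ => φ (η, ζ)) x ξ • a x ξ) = 0

/-- The symbol class `S^{m,L}_{1,1}`. -/
def IsS11L (m L : ℝ) (a : Rd d → Rd d → MatL n) : Prop := IsS11 m a ∧ FT1VanishesOn L a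

/-- The symbol class `Γ^m_k` (symbols of order `m` with regularity `k`). -/
def IsGamma (m : ℝ) (k : ℕ) (A : Rd d → Rd d → MatL n) : Prop :=
  (∀ᵐ x ∂(volume : Measure (Rd d)), ContDiff ℝ (⊤ : ℕ∞) (fun ξ => A x ξ)) ∧
  ∀ lx lξ : List (Fin d), lx.length ≤ k → ∃ C : ℝ, ∀ ξ : Rd d,
    ∀ᵐ x ∂(volume : Measure (Rd d)),
      ‖mderiv lx lξ A x ξ‖ ≤ C * jap ξ ^ (m - (lξ.length : ℝ))

/-- All `Γ^m_k`-seminorms of `A` of order at most `N` are bounded by `r`. -/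
def GammaBddBy (m : ℝ) (k N : ℕ) (r : ℝ) (A : Rd d → Rd d → MatL n) : Prop :=
  ∀ lx lξ : List (Fin d), lx.length ≤ k → lξ.length ≤ N → ∀ ξ : Rd d,
    ∀ᵐ x ∂(volume : Measure (Rd d)),
      ‖mderiv lx lξ A x ξ‖ ≤ r * jap ξ ^ (m - (lξ.length : ℝ))

/-- An admissible `ε`-cut-off function. -/
structure IsAdmissibleCutoff (ε₁ ε₂ : ℝ) (χ : Rd d → Rd d → ℝ) : Prop where
  pos : 0 < ε₁
  lt : ε₁ < ε₂
  lt_one : ε₂ < 1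
  smooth : ContDiff ℝ (⊤ : ℕ∞) (fun P : Rd d × Rd d => χ P.1 P.2)
  even_fst : ∀ η ξ : Rd d, χ (-η) ξ = χ η ξ
  even_snd : ∀ η ξ : Rd d, χ η (-ξ) = χ η ξ
  nonneg : ∀ η ξ : Rd d, 0 ≤ χ η ξ
  le_one : ∀ η ξ : Rd d, χ η ξ ≤ 1
  eq_one : ∀ η ξ : Rd d, ‖η‖ ≤ ε₁ * ‖ξ‖ → 1 ≤ ‖ξ‖ → χ η ξ = 1
  eq_zero : ∀ η ξ : Rd d, (ε₂ * jap ξ ≤ ‖η‖ ∨ ‖ξ‖ ≤ ε₂) → χ η ξ = 0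
  derivBound : ∀ lη lξ : List (Fin d), ∃ C : ℝ, ∀ η ξ : Rd d,
    ‖mderiv lη lξ χ η ξ‖ ≤ C * jap ξ ^ (-((lη.length : ℝ) + (lξ.length : ℝ)))

/-- The kernel `K^χ = ℱ₁⁻¹ χ`. -/
def Kchi (χ : Rd d → Rd d → ℝ) (z ξ : Rd d) : ℂ :=
  ((2 * Real.pi) ^ (-(d : ℝ) / 2)) •
    ∫ η : Rd d, Complex.exp (Complex.I * ((inner ℝ η z : ℝ) : ℂ)) * (χ η ξ : ℂ)

/-- The regularized symbol `R^χ(A) = K^χ ∗₁ A`. -/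
def Rchi (χ : Rd d → Rd d → ℝ) (A : Rd d → Rd d → MatL n) (x ξ : Rd d) : MatL n :=
  ∫ y : Rd d, Kchi χ (x - y) ξ • A y ξ

/-- The para-differential operator `Op_χ[A] = op[R^χ(A)]`. -/
def OpChi (χ : Rd d → Rd d → ℝ) (A : Rd d → Rd d → MatL n) : (Rd d → Cn n) → Rd d → Cn n :=
  op (fun x ξ => Rchi χ A x ξ)

/-- The pointwise adjoint symbol `A*`. -/
def adjSym (A : Rd d → Rd d → MatL n) : Rd d → Rd d → MatL n :=
  fun x ξ => ContinuousLinearMap.adjoint (A x ξ)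

/-- The pointwise product symbol `(x,ξ) ↦ B(x,ξ)A(x,ξ)`. -/
def mulSym (B A : Rd d → Rd d → MatL n) : Rd d → Rd d → MatL n :=
  fun x ξ => (B x ξ).comp (A x ξ)

/-- `a` is a matrix-valued Schwartz symbol. -/
def IsSchwartzSym (a : Rd d → Rd d → MatL n) : Prop :=
  ∃ φ : SchwartzMap (Rd d × Rd d) (MatL n), ∀ x ξ : Rd d, a x ξ = φ (x, ξ)

end SymbolClasses
section AdjProofAux

open Complex SchwartzMap
open scoped FourierTransform RealInnerProductSpace

namespace AdjAux
variable {d : ℕ}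
def cst (d : ℕ) : ℝ := (2 * Real.pi) ^ (-(d : ℝ) / 2)
lemma cst_pos : 0 < cst d := Real.rpow_pos_of_pos (by positivity) _
variable {E : Type*} [NormedAddCommGroup E] [NormedSpace ℂ E]
def mFT (f : Rd d → E) (ξ : Rd d) : E :=
  cst d • ∫ x : Rd d, Complex.exp (-Complex.I * ((inner ℝ x ξ : ℝ) : ℂ)) • f x

lemma exp_smul_eq (x ξ : Rd d) (v : E) :
    (𝐞 (-⟪x, (2 * Real.pi)⁻¹ • ξ⟫) : Circle) • v
      = Complex.exp (-Complex.I * ((⟪x, ξ⟫ : ℝ) : ℂ)) • v := by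
  rw [Circle.smul_def, Real.fourierChar_apply]
  congr 1
  rw [real_inner_smul_right]
  have h : (2 * Real.pi) * -((2 * Real.pi)⁻¹ * ⟪x, ξ⟫) = -⟪x, ξ⟫ := by
    rw [mul_neg, ← mul_assoc, mul_inv_cancel₀ (by positivity : (2 * Real.pi : ℝ) ≠ 0), one_mul]
  rw [h]
  push_cast
  ring

lemma mFT_eq (f : Rd d → E) :
    mFT f = fun ξ => cst d • (𝓕 f) ((2 * Real.pi)⁻¹ • ξ) := by
  funext ξ
  rw [mFT, Real.fourier_eq]
  simp_rw [exp_smul_eq]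
section Schwartz
variable [CompleteSpace E]

lemma htg_scale : Function.HasTemperateGrowth (fun ξ : Rd d => (2 * Real.pi)⁻¹ • ξ) := by
  exact (((2 * Real.pi)⁻¹ : ℝ) • ContinuousLinearMap.id ℝ (Rd d)).hasTemperateGrowth

lemma hup_scale : ∃ (k : ℕ) (C : ℝ), ∀ ξ : Rd d,
    ‖ξ‖ ≤ C * (1 + ‖(2 * Real.pi)⁻¹ • ξ‖) ^ k := by
  refine ⟨1, 2 * Real.pi, fun ξ => ?_⟩
  have hπ : (0:ℝ) < 2 * Real.pi := by positivity
  rw [norm_smul, pow_one]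
  rw [Real.norm_eq_abs, _root_.abs_of_nonneg (by positivity : (0:ℝ) ≤ (2 * Real.pi)⁻¹)]
  rw [mul_add, mul_one, ← mul_assoc, mul_inv_cancel₀ hπ.ne', one_mul]
  linarith [norm_nonneg ξ, hπ]

/-- Our Fourier transform as a Schwartz function. -/
def mFTS (u : 𝓢(Rd d, E)) : 𝓢(Rd d, E) :=
  cst d • (compCLM ℂ htg_scale hup_scale (fourierTransformCLM ℂ u))

lemma mFTS_apply (u : 𝓢(Rd d, E)) : ⇑(mFTS u) = mFT ⇑u := by
  funext ξ
  rw [mFT_eq]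
  simp [mFTS, fourier_coe]

lemma mFT_continuous (u : 𝓢(Rd d, E)) : Continuous (mFT ⇑u) := by
  rw [← mFTS_apply]; exact (mFTS u).continuous

lemma mFT_integrable (u : 𝓢(Rd d, E)) : MeasureTheory.Integrable (mFT ⇑u) := by
  rw [← mFTS_apply]; exact (mFTS u).integrable

lemma cst_cst : cst d * cst d * (2 * Real.pi) ^ (d : ℕ) = 1 := by
  have hπ : (0:ℝ) < 2 * Real.pi := by positivity
  rw [cst, ← Real.rpow_add hπ, ← Real.rpow_natCast (2 * Real.pi) d, ← Real.rpow_add hπ]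
  norm_num

lemma mFT_inversion (u : 𝓢(Rd d, E)) (x : Rd d) :
    cst d • ∫ ξ : Rd d, Complex.exp (Complex.I * ((⟪x, ξ⟫ : ℝ) : ℂ)) • mFT (⇑u) ξ = u x := by
  have hπ : (0:ℝ) < 2 * Real.pi := by positivity
  set G : Rd d → E := fun w => (𝐞 ⟪w, x⟫ : Circle) • 𝓕 (⇑u) w with hG
  have key : ∀ ξ : Rd d, Complex.exp (Complex.I * ((⟪x, ξ⟫ : ℝ) : ℂ)) • mFT (⇑u) ξ
      = cst d • G ((2 * Real.pi)⁻¹ • ξ) := by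
    intro ξ
    rw [mFT_eq, hG]
    simp only
    rw [Circle.smul_def, Real.fourierChar_apply, real_inner_smul_left, smul_comm]
    congr 2
    have h2 : (2 * Real.pi) * ((2 * Real.pi)⁻¹ * ⟪ξ, x⟫) = ⟪x, ξ⟫ := by
      rw [← mul_assoc, mul_inv_cancel₀ hπ.ne', one_mul, real_inner_comm]
    rw [h2]
    push_cast
    ring
  rw [integral_congr_ae (Filter.Eventually.of_forall key), integral_smul,
    MeasureTheory.Measure.integral_comp_inv_smul volume G (2 * Real.pi)]
  have hGint : ∫ w, G w = u x := by
    rw [hG]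
    have : ∫ w, (𝐞 ⟪w, x⟫ : Circle) • 𝓕 (⇑u) w = 𝓕⁻ (𝓕 ⇑u) x :=
      (Real.fourierInv_eq _ _).symm
    rw [this]
    exact u.integrable.fourierInv_fourier_eq
      (by simpa [fourier_coe] using (fourierTransformCLM ℂ u).integrable) u.continuous.continuousAt
  rw [hGint, finrank_euclideanSpace_fin, _root_.abs_of_nonneg (by positivity), smul_smul, smul_smul,
    cst_cst, one_smul]

end Schwartz

section Slice

lemma htg_slice (ξ : Rd d) : Function.HasTemperateGrowth (fun x : Rd d => (x, ξ)) := by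
  apply Function.HasTemperateGrowth.of_fderiv (k := 1) (C := 1 + ‖ξ‖) ?_
    (differentiable_id.prodMk (differentiable_const ξ)) ?_
  · have hfd : (fderiv ℝ (fun x : Rd d => (x, ξ)))
        = fun _ => ((ContinuousLinearMap.id ℝ (Rd d)).prod 0) := by
      funext x
      exact ((hasFDerivAt_id x).prodMk (hasFDerivAt_const ξ x)).fderiv
    rw [hfd]
    exact .const _
  · intro x
    rw [Prod.norm_def, pow_one]
    have h1 : ‖x‖ ≤ (1 + ‖ξ‖) * (1 + ‖x‖) := by nlinarith [norm_nonneg x, norm_nonneg ξ]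
    have h2 : ‖ξ‖ ≤ (1 + ‖ξ‖) * (1 + ‖x‖) := by nlinarith [norm_nonneg x, norm_nonneg ξ]
    exact max_le h1 h2

/-- Freezing the second variable of a Schwartz function on a product. -/
def slice (φ : 𝓢(Rd d × Rd d, E)) (ξ : Rd d) : 𝓢(Rd d, E) :=
  compCLM ℝ (htg_slice ξ)
    ⟨1, 1, fun x => by
      simpa using le_trans (norm_fst_le (x, ξ)) (by simp [norm_nonneg])⟩ φ

lemma slice_apply (φ : 𝓢(Rd d × Rd d, E)) (ξ x : Rd d) : slice φ ξ x = φ (x, ξ) := rfl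

lemma slice_coe (φ : 𝓢(Rd d × Rd d, E)) (ξ : Rd d) :
    ⇑(slice φ ξ) = fun x => φ (x, ξ) := funext fun _ => rfl

lemma prod_decay (φ : 𝓢(Rd d × Rd d, E)) :
    ∃ C : ℝ, 0 ≤ C ∧ ∀ x ξ : Rd d, ‖φ (x, ξ)‖ ≤ C * ((1 + ‖x‖) ^ (d + 1))⁻¹ := by
  refine ⟨2 ^ (d + 1) * ((Finset.Iic ((d+1 : ℕ), (0 : ℕ))).sup
      (schwartzSeminormFamily ℝ (Rd d × Rd d) E)) φ, by positivity, fun x ξ => ?_⟩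
  have h := one_add_le_sup_seminorm_apply (𝕜 := ℝ) (m := ((d+1 : ℕ), (0:ℕ)))
    (k := d + 1) (n := 0) le_rfl le_rfl φ (x, ξ)
  rw [norm_iteratedFDeriv_zero] at h
  have hb : (0:ℝ) < (1 + ‖x‖) ^ (d + 1) := by positivity
  have h2 : ‖φ (x, ξ)‖ * (1 + ‖x‖) ^ (d+1) ≤
      2 ^ (d + 1) * ((Finset.Iic ((d+1 : ℕ), (0 : ℕ))).sup
        (schwartzSeminormFamily ℝ (Rd d × Rd d) E)) φ := by
    refine le_trans ?_ h
    rw [mul_comm]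
    exact mul_le_mul_of_nonneg_right
      (pow_le_pow_left₀ (by positivity) (by linarith [norm_fst_le (x, ξ)]) _) (norm_nonneg _)
  calc ‖φ (x, ξ)‖ ≤ (2 ^ (d + 1) * ((Finset.Iic ((d+1 : ℕ), (0 : ℕ))).sup
        (schwartzSeminormFamily ℝ (Rd d × Rd d) E)) φ) / (1 + ‖x‖) ^ (d+1) :=
      (le_div_iff₀ hb).2 h2
    _ = _ := div_eq_mul_inv _ _

lemma integrable_decay :
    MeasureTheory.Integrable (fun x : Rd d => ((1 + ‖x‖) ^ (d + 1))⁻¹) := by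
  have hd : (Module.finrank ℝ (Rd d) : ℝ) < (d + 1 : ℝ) := by
    rw [finrank_euclideanSpace_fin]
    exact_mod_cast lt_add_one d
  have := integrable_one_add_norm (E := Rd d) (μ := MeasureTheory.volume) hd
  refine this.congr (Filter.Eventually.of_forall fun x => ?_)
  show (1 + ‖x‖) ^ (-((d:ℝ) + 1)) = ((1 + ‖x‖) ^ (d + 1))⁻¹
  conv_rhs => rw [← Real.rpow_natCast (1 + ‖x‖) (d+1), ← Real.rpow_neg (by positivity)]
  norm_num

lemma norm_exp_smul (r : ℝ) (v : E) :
    ‖Complex.exp (-Complex.I * (r : ℂ)) • v‖ = ‖v‖ := by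
  rw [norm_smul, Complex.norm_exp]
  simp

lemma norm_exp_smul' (r : ℝ) (v : E) :
    ‖Complex.exp (Complex.I * (r : ℂ)) • v‖ = ‖v‖ := by
  rw [norm_smul, Complex.norm_exp]
  simp

lemma mFT_norm_le (f : Rd d → E) (ξ : Rd d) :
    ‖mFT f ξ‖ ≤ cst d * ∫ x : Rd d, ‖f x‖ := by
  rw [mFT, norm_smul, Real.norm_eq_abs, _root_.abs_of_nonneg cst_pos.le]
  refine mul_le_mul_of_nonneg_left ?_ cst_pos.le
  refine le_trans (norm_integral_le_integral_norm _) (le_of_eq ?_)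
  exact integral_congr_ae (Filter.Eventually.of_forall fun x => norm_exp_smul _ _)

lemma cont_mFT_slice (φ : 𝓢(Rd d × Rd d, E)) :
    Continuous (fun p : Rd d × Rd d => mFT (fun x => φ (x, p.2)) p.1) := by
  obtain ⟨C, hC0, hC⟩ := prod_decay φ
  unfold mFT
  apply Continuous.smul continuous_const
  apply MeasureTheory.continuous_of_dominated
    (bound := fun x : Rd d => C * ((1 + ‖x‖) ^ (d + 1))⁻¹)
  · intro p
    apply Continuous.aestronglyMeasurable
    exact (Complex.continuous_exp.comp (continuous_const.mul
      (Complex.continuous_ofReal.comp (continuous_id.inner continuous_const)))).smul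
      (φ.continuous.comp (continuous_id.prodMk continuous_const))
  · intro p
    filter_upwards with x
    rw [norm_exp_smul]
    exact hC x p.2
  · exact integrable_decay.const_mul C
  · filter_upwards with x
    exact (Complex.continuous_exp.comp (continuous_const.mul
      (Complex.continuous_ofReal.comp (continuous_const.inner continuous_fst)))).smul
      (φ.continuous.comp (continuous_const.prodMk continuous_snd))

end Slice
section Inner

lemma norm_exp_I_mul (r : ℝ) : ‖Complex.exp (Complex.I * (r : ℂ))‖ = 1 := by
  rw [Complex.norm_exp]; simp

lemma norm_exp_negI_mul (r : ℝ) : ‖Complex.exp (-Complex.I * (r : ℂ))‖ = 1 := by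
  rw [Complex.norm_exp]; simp

lemma conj_exp_I (r : ℝ) :
    (starRingEnd ℂ) (Complex.exp (Complex.I * (r : ℂ))) = Complex.exp (-Complex.I * (r : ℂ)) := by
  rw [← Complex.exp_conj]
  congr 1
  simp [map_mul, Complex.conj_I, Complex.conj_ofReal]

lemma conj_exp_negI (r : ℝ) :
    (starRingEnd ℂ) (Complex.exp (-Complex.I * (r : ℂ))) = Complex.exp (Complex.I * (r : ℂ)) := by
  rw [← Complex.exp_conj]
  congr 1
  simp [map_mul, Complex.conj_I, Complex.conj_ofReal]

variable {H : Type*} [NormedAddCommGroup H] [InnerProductSpace ℂ H] [CompleteSpace H]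
  {α : Type*} [MeasurableSpace α] {μ : MeasureTheory.Measure α}

lemma integral_inner_left {f : α → H} (hf : MeasureTheory.Integrable f μ) (c : H) :
    ∫ x, (inner ℂ (f x) c : ℂ) ∂μ = (inner ℂ (∫ x, f x ∂μ) c : ℂ) := by
  have h1 : ∀ x, (inner ℂ (f x) c : ℂ) = (starRingEnd ℂ) (inner ℂ c (f x)) :=
    fun x => (inner_conj_symm (f x) c).symm
  simp_rw [h1]
  rw [integral_conj, integral_inner hf, inner_conj_symm]

lemma integrable_unit_smul {f : Rd d → E} (hf : MeasureTheory.Integrable f)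
    {p : Rd d → ℂ} (hp : Continuous p) (hnorm : ∀ y, ‖p y‖ = 1) :
    MeasureTheory.Integrable (fun y => p y • f y) := by
  refine hf.norm.mono' (hp.aestronglyMeasurable.smul hf.1) ?_
  filter_upwards with y
  rw [norm_smul, hnorm, one_mul]

lemma cont_phase_right (x : Rd d) :
    Continuous fun η : Rd d => Complex.exp (Complex.I * ((⟪x, η⟫ : ℝ) : ℂ)) :=
  Complex.continuous_exp.comp (continuous_const.mul
    (Complex.continuous_ofReal.comp (continuous_const.inner continuous_id)))

lemma cont_phase_left (s : Rd d) :
    Continuous fun x : Rd d => Complex.exp (-Complex.I * ((⟪x, s⟫ : ℝ) : ℂ)) :=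
  Complex.continuous_exp.comp (continuous_const.mul
    (Complex.continuous_ofReal.comp (continuous_id.inner continuous_const)))

end Inner

section Key

variable {n : ℕ}

/-- The partial Fourier transform of the Schwartz symbol. -/
def Asym (φ : 𝓢(Rd d × Rd d, MatL n)) (η ξ : Rd d) : MatL n := mFT (⇑(slice φ ξ)) η

lemma Asym_integrable (φ : 𝓢(Rd d × Rd d, MatL n)) (ξ : Rd d) :
    MeasureTheory.Integrable (fun η => Asym φ η ξ) := mFT_integrable (slice φ ξ)

lemma Asym_cont (φ : 𝓢(Rd d × Rd d, MatL n)) :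
    Continuous (fun p : Rd d × Rd d => Asym φ p.1 p.2) := cont_mFT_slice φ

lemma Asym_bound (φ : 𝓢(Rd d × Rd d, MatL n)) :
    ∃ M : ℝ, 0 ≤ M ∧ ∀ η ξ : Rd d, ‖Asym φ η ξ‖ ≤ M := by
  obtain ⟨C, hC0, hC⟩ := prod_decay φ
  refine ⟨cst d * ∫ x : Rd d, C * ((1 + ‖x‖) ^ (d + 1))⁻¹, ?_, fun η ξ => ?_⟩
  · apply mul_nonneg cst_pos.le
    apply MeasureTheory.integral_nonneg
    intro x
    positivity
  · refine le_trans (mFT_norm_le _ η) (mul_le_mul_of_nonneg_left ?_ cst_pos.le)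
    refine MeasureTheory.integral_mono (slice φ ξ).integrable.norm
      (integrable_decay.const_mul C) ?_
    intro x
    exact hC x ξ

lemma slice_inversion (φ : 𝓢(Rd d × Rd d, MatL n)) (x ξ : Rd d) :
    φ (x, ξ) = cst d • ∫ η : Rd d, Complex.exp (Complex.I * ((⟪x, η⟫ : ℝ) : ℂ)) • Asym φ η ξ :=
  (mFT_inversion (slice φ ξ) x).symm

lemma key1 (φ : 𝓢(Rd d × Rd d, MatL n)) (w : 𝓢(Rd d, Cn n)) (ξ : Rd d) (v : Cn n) :
    ∫ x : Rd d, Complex.exp (-Complex.I * ((⟪x, ξ⟫ : ℝ) : ℂ)) * (inner ℂ ((φ (x, ξ)) v) (w x) : ℂ)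
      = ∫ η : Rd d, (inner ℂ ((Asym φ η ξ) v) (mFT (⇑w) (ξ + η)) : ℂ) := by
  have hMint : MeasureTheory.Integrable (fun η => Asym φ η ξ) := Asym_integrable φ ξ
  have hAv : MeasureTheory.Integrable (fun η => (Asym φ η ξ) v) :=
    hMint.apply_continuousLinearMap v
  have step1 : ∀ x : Rd d,
      Complex.exp (-Complex.I * ((⟪x, ξ⟫ : ℝ) : ℂ)) * (inner ℂ ((φ (x, ξ)) v) (w x) : ℂ)
        = cst d • ∫ η : Rd d, Complex.exp (-Complex.I * ((⟪x, ξ + η⟫ : ℝ) : ℂ))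
            * (inner ℂ ((Asym φ η ξ) v) (w x) : ℂ) := by
    intro x
    rw [slice_inversion φ x ξ, ContinuousLinearMap.smul_apply,
      ContinuousLinearMap.integral_apply
        (integrable_unit_smul hMint (cont_phase_right x) (fun η => norm_exp_I_mul _))]
    simp only [ContinuousLinearMap.smul_apply]
    rw [RCLike.real_smul_eq_coe_smul (K := ℂ), inner_smul_real_left, mul_smul_comm]
    rw [← integral_inner_left (integrable_unit_smul hAv (cont_phase_right x) (fun η => norm_exp_I_mul _))]
    simp_rw [inner_smul_left, conj_exp_I]
    rw [← MeasureTheory.integral_const_mul]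
    congr 1
    apply MeasureTheory.integral_congr_ae
    filter_upwards with η
    rw [← mul_assoc, ← Complex.exp_add]
    congr 2
    rw [inner_add_right]
    push_cast
    ring
  rw [MeasureTheory.integral_congr_ae (Filter.Eventually.of_forall step1),
    MeasureTheory.integral_smul]
  have hFub : MeasureTheory.Integrable (Function.uncurry fun (x η : Rd d) =>
      Complex.exp (-Complex.I * ((⟪x, ξ + η⟫ : ℝ) : ℂ)) * (inner ℂ ((Asym φ η ξ) v) (w x) : ℂ))
      (MeasureTheory.volume.prod MeasureTheory.volume) := by
    refine MeasureTheory.Integrable.mono'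
      ((w.integrable.norm).mul_prod ((Asym_integrable φ ξ).norm.mul_const ‖v‖)) ?_ ?_
    · apply Continuous.aestronglyMeasurable
      refine Continuous.mul ?_ ?_
      · exact Complex.continuous_exp.comp (continuous_const.mul
          (Complex.continuous_ofReal.comp
            (continuous_fst.inner (continuous_const.add continuous_snd))))
      · exact Continuous.inner
          ((((Asym_cont φ).comp (continuous_snd.prodMk continuous_const)).clm_apply
            continuous_const))
          (w.continuous.comp continuous_fst)
    · filter_upwards with z
      rw [Function.uncurry, norm_mul, norm_exp_negI_mul, one_mul]
      calc ‖(inner ℂ ((Asym φ z.2 ξ) v) (w z.1) : ℂ)‖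
          ≤ ‖(Asym φ z.2 ξ) v‖ * ‖w z.1‖ := norm_inner_le_norm _ _
        _ ≤ (‖Asym φ z.2 ξ‖ * ‖v‖) * ‖w z.1‖ := by
            gcongr
            exact (Asym φ z.2 ξ).le_opNorm v
        _ = ‖w z.1‖ * (‖Asym φ z.2 ξ‖ * ‖v‖) := by ring
  rw [MeasureTheory.integral_integral_swap hFub]
  have step3 : ∀ η : Rd d,
      ∫ x : Rd d, Complex.exp (-Complex.I * ((⟪x, ξ + η⟫ : ℝ) : ℂ))
          * (inner ℂ ((Asym φ η ξ) v) (w x) : ℂ)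
        = (inner ℂ ((Asym φ η ξ) v) (∫ x : Rd d,
            Complex.exp (-Complex.I * ((⟪x, ξ + η⟫ : ℝ) : ℂ)) • w x) : ℂ) := by
    intro η
    rw [← integral_inner (integrable_unit_smul w.integrable (cont_phase_left (ξ + η)) (fun x => norm_exp_negI_mul _))]
    apply MeasureTheory.integral_congr_ae
    filter_upwards with x
    rw [inner_smul_right]
  rw [MeasureTheory.integral_congr_ae (Filter.Eventually.of_forall step3)]
  have step4 : ∀ η : Rd d, (inner ℂ ((Asym φ η ξ) v) (mFT (⇑w) (ξ + η)) : ℂ)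
      = cst d • (inner ℂ ((Asym φ η ξ) v) (∫ x : Rd d,
          Complex.exp (-Complex.I * ((⟪x, ξ + η⟫ : ℝ) : ℂ)) • w x) : ℂ) := by
    intro η
    rw [mFT, RCLike.real_smul_eq_coe_smul (K := ℂ), inner_smul_real_right]
  rw [MeasureTheory.integral_congr_ae (Filter.Eventually.of_forall step4),
    MeasureTheory.integral_smul]

lemma key2 (φ : 𝓢(Rd d × Rd d, MatL n)) (u : 𝓢(Rd d, Cn n)) (ξ : Rd d) (v : Cn n) :
    ∫ x : Rd d, Complex.exp (Complex.I * ((⟪x, ξ⟫ : ℝ) : ℂ)) * (inner ℂ (u x) ((φ (x, ξ)) v) : ℂ)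
      = ∫ η : Rd d, (inner ℂ (mFT (⇑u) (ξ + η)) ((Asym φ η ξ) v) : ℂ) := by
  have hMint : MeasureTheory.Integrable (fun η => Asym φ η ξ) := Asym_integrable φ ξ
  have hAv : MeasureTheory.Integrable (fun η => (Asym φ η ξ) v) :=
    hMint.apply_continuousLinearMap v
  have step1 : ∀ x : Rd d,
      Complex.exp (Complex.I * ((⟪x, ξ⟫ : ℝ) : ℂ)) * (inner ℂ (u x) ((φ (x, ξ)) v) : ℂ)
        = cst d • ∫ η : Rd d, Complex.exp (Complex.I * ((⟪x, ξ + η⟫ : ℝ) : ℂ))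
            * (inner ℂ (u x) ((Asym φ η ξ) v) : ℂ) := by
    intro x
    rw [slice_inversion φ x ξ, ContinuousLinearMap.smul_apply,
      ContinuousLinearMap.integral_apply
        (integrable_unit_smul hMint (cont_phase_right x) (fun η => norm_exp_I_mul _))]
    simp only [ContinuousLinearMap.smul_apply]
    rw [RCLike.real_smul_eq_coe_smul (K := ℂ), inner_smul_real_right, mul_smul_comm]
    rw [← integral_inner (integrable_unit_smul hAv (cont_phase_right x) (fun η => norm_exp_I_mul _))]
    simp_rw [inner_smul_right]
    rw [← MeasureTheory.integral_const_mul]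
    congr 1
    apply MeasureTheory.integral_congr_ae
    filter_upwards with η
    rw [← mul_assoc, ← Complex.exp_add]
    congr 2
    rw [inner_add_right]
    push_cast
    ring
  rw [MeasureTheory.integral_congr_ae (Filter.Eventually.of_forall step1),
    MeasureTheory.integral_smul]
  have hFub : MeasureTheory.Integrable (Function.uncurry fun (x η : Rd d) =>
      Complex.exp (Complex.I * ((⟪x, ξ + η⟫ : ℝ) : ℂ)) * (inner ℂ (u x) ((Asym φ η ξ) v) : ℂ))
      (MeasureTheory.volume.prod MeasureTheory.volume) := by
    refine MeasureTheory.Integrable.mono'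
      ((u.integrable.norm).mul_prod ((Asym_integrable φ ξ).norm.mul_const ‖v‖)) ?_ ?_
    · apply Continuous.aestronglyMeasurable
      refine Continuous.mul ?_ ?_
      · exact Complex.continuous_exp.comp (continuous_const.mul
          (Complex.continuous_ofReal.comp
            (continuous_fst.inner (continuous_const.add continuous_snd))))
      · exact Continuous.inner (u.continuous.comp continuous_fst)
          ((((Asym_cont φ).comp (continuous_snd.prodMk continuous_const)).clm_apply
            continuous_const))
    · filter_upwards with z
      rw [Function.uncurry, norm_mul, norm_exp_I_mul, one_mul]
      calc ‖(inner ℂ (u z.1) ((Asym φ z.2 ξ) v) : ℂ)‖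
          ≤ ‖u z.1‖ * ‖(Asym φ z.2 ξ) v‖ := norm_inner_le_norm _ _
        _ ≤ ‖u z.1‖ * (‖Asym φ z.2 ξ‖ * ‖v‖) := by
            gcongr
            exact (Asym φ z.2 ξ).le_opNorm v
  rw [MeasureTheory.integral_integral_swap hFub]
  have step3 : ∀ η : Rd d,
      ∫ x : Rd d, Complex.exp (Complex.I * ((⟪x, ξ + η⟫ : ℝ) : ℂ))
          * (inner ℂ (u x) ((Asym φ η ξ) v) : ℂ)
        = (inner ℂ (∫ x : Rd d, Complex.exp (-Complex.I * ((⟪x, ξ + η⟫ : ℝ) : ℂ)) • u x)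
            ((Asym φ η ξ) v) : ℂ) := by
    intro η
    rw [← integral_inner_left (integrable_unit_smul u.integrable (cont_phase_left (ξ + η)) (fun x => norm_exp_negI_mul _))]
    apply MeasureTheory.integral_congr_ae
    filter_upwards with x
    rw [inner_smul_left, conj_exp_negI]
  rw [MeasureTheory.integral_congr_ae (Filter.Eventually.of_forall step3)]
  have step4 : ∀ η : Rd d, (inner ℂ (mFT (⇑u) (ξ + η)) ((Asym φ η ξ) v) : ℂ)
      = cst d • (inner ℂ (∫ x : Rd d,
          Complex.exp (-Complex.I * ((⟪x, ξ + η⟫ : ℝ) : ℂ)) • u x) ((Asym φ η ξ) v) : ℂ) := by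
    intro η
    rw [mFT, RCLike.real_smul_eq_coe_smul (K := ℂ), inner_smul_real_left]
  rw [MeasureTheory.integral_congr_ae (Filter.Eventually.of_forall step4),
    MeasureTheory.integral_smul]

end Key
lemma FT_eq_mFT {n : ℕ} (f : Rd d → Cn n) : FT f = mFT f := rfl

end AdjAux

end AdjProofAux

open Complex SchwartzMap AdjAux
open scoped FourierTransform RealInnerProductSpace

set_option maxHeartbeats 2000000

/-- Lemma 2.2 / `lem:adjS`.
If `a` is a matrix-valued Schwartz symbol, then the `L²`-adjoint of `op[a]` is `op[g]`,
where `g` is determined by `ℱ₁g(η,ξ) = (ℱ₁a(−η,η+ξ))*`. -/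
theorem adjoint_of_schwartz_symbol {d n : ℕ} (a g : Rd d → Rd d → MatL n)
    (ha : IsSchwartzSym a) (hg : IsSchwartzSym g)
    (hrel : ∀ η ξ : Rd d, FT1 g η ξ = ContinuousLinearMap.adjoint (FT1 a (-η) (η + ξ))) :
    ∀ f₁ f₂ : SchwartzMap (Rd d) (Cn n),
      L2inner (op a ⇑f₁) ⇑f₂ = L2inner ⇑f₁ (op g ⇑f₂) := by
  obtain ⟨φa, ha0⟩ := ha
  obtain ⟨φg, hg0⟩ := hg
  have ha' : a = fun x ξ => φa (x, ξ) := funext fun x => funext fun ξ => ha0 x ξ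
  have hg' : g = fun x ξ => φg (x, ξ) := funext fun x => funext fun ξ => hg0 x ξ
  subst ha' hg'
  intro f₁ f₂
  -- the relation between the partial Fourier transforms
  have hrelA : ∀ η ξ : Rd d, Asym φg η ξ
      = ContinuousLinearMap.adjoint (Asym φa (-η) (η + ξ)) := by
    intro η ξ
    have h1 : FT1 (fun x ξ => φg (x, ξ)) η ξ = Asym φg η ξ := by
      rw [FT1, Asym, mFT, slice_coe, cst]
    have h2 : FT1 (fun x ξ => φa (x, ξ)) (-η) (η + ξ) = Asym φa (-η) (η + ξ) := by
      rw [FT1, Asym, mFT, slice_coe, cst]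
    rw [← h1, ← h2]
    exact hrel η ξ
  set Ma := SchwartzMap.seminorm ℝ 0 0 φa with hMa
  set Mg := SchwartzMap.seminorm ℝ 0 0 φg with hMg
  -- pointwise identity for the left-hand side
  have hbaseL : ∀ x : Rd d, MeasureTheory.Integrable
      (fun ξ : Rd d => (φa (x, ξ)) (mFT (⇑f₁) ξ)) := by
    intro x
    refine MeasureTheory.Integrable.mono' ((mFT_integrable f₁).norm.const_mul Ma) ?_ ?_
    · exact ((φa.continuous.comp (continuous_const.prodMk continuous_id)).clm_apply
        (mFT_continuous f₁)).aestronglyMeasurable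
    · filter_upwards with ξ
      calc ‖(φa (x, ξ)) (mFT (⇑f₁) ξ)‖ ≤ ‖φa (x, ξ)‖ * ‖mFT (⇑f₁) ξ‖ :=
            (φa (x, ξ)).le_opNorm _
        _ ≤ Ma * ‖mFT (⇑f₁) ξ‖ := by
            gcongr
            exact φa.norm_le_seminorm ℝ _
  have hL1 : ∀ x : Rd d, (inner ℂ (op (fun x ξ => φa (x, ξ)) (⇑f₁) x) (f₂ x) : ℂ)
      = cst d • ∫ ξ : Rd d, Complex.exp (-Complex.I * ((⟪x, ξ⟫ : ℝ) : ℂ))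
          * (inner ℂ ((φa (x, ξ)) (mFT (⇑f₁) ξ)) (f₂ x) : ℂ) := by
    intro x
    have hop : op (fun x ξ => φa (x, ξ)) (⇑f₁) x
        = cst d • ∫ ξ : Rd d, Complex.exp (Complex.I * ((⟪x, ξ⟫ : ℝ) : ℂ))
            • ((φa (x, ξ)) (mFT (⇑f₁) ξ)) := by
      rw [op, cst]
      simp only [FT_eq_mFT]
    rw [hop, RCLike.real_smul_eq_coe_smul (K := ℂ), inner_smul_real_left,
      ← integral_inner_left (integrable_unit_smul (hbaseL x) (cont_phase_right x)
        (fun ξ => norm_exp_I_mul _))]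
    congr 1
    apply MeasureTheory.integral_congr_ae
    filter_upwards with ξ
    rw [inner_smul_left, conj_exp_I]
  -- pointwise identity for the right-hand side
  have hbaseR : ∀ x : Rd d, MeasureTheory.Integrable
      (fun ξ : Rd d => (φg (x, ξ)) (mFT (⇑f₂) ξ)) := by
    intro x
    refine MeasureTheory.Integrable.mono' ((mFT_integrable f₂).norm.const_mul Mg) ?_ ?_
    · exact ((φg.continuous.comp (continuous_const.prodMk continuous_id)).clm_apply
        (mFT_continuous f₂)).aestronglyMeasurable
    · filter_upwards with ξ
      calc ‖(φg (x, ξ)) (mFT (⇑f₂) ξ)‖ ≤ ‖φg (x, ξ)‖ * ‖mFT (⇑f₂) ξ‖ :=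
            (φg (x, ξ)).le_opNorm _
        _ ≤ Mg * ‖mFT (⇑f₂) ξ‖ := by
            gcongr
            exact φg.norm_le_seminorm ℝ _
  have hR1 : ∀ x : Rd d, (inner ℂ (f₁ x) (op (fun x ξ => φg (x, ξ)) (⇑f₂) x) : ℂ)
      = cst d • ∫ ξ : Rd d, Complex.exp (Complex.I * ((⟪x, ξ⟫ : ℝ) : ℂ))
          * (inner ℂ (f₁ x) ((φg (x, ξ)) (mFT (⇑f₂) ξ)) : ℂ) := by
    intro x
    have hop : op (fun x ξ => φg (x, ξ)) (⇑f₂) x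
        = cst d • ∫ ξ : Rd d, Complex.exp (Complex.I * ((⟪x, ξ⟫ : ℝ) : ℂ))
            • ((φg (x, ξ)) (mFT (⇑f₂) ξ)) := by
      rw [op, cst]
      simp only [FT_eq_mFT]
    rw [hop, RCLike.real_smul_eq_coe_smul (K := ℂ), inner_smul_real_right,
      ← integral_inner (integrable_unit_smul (hbaseR x) (cont_phase_right x)
        (fun ξ => norm_exp_I_mul _))]
    congr 1
    apply MeasureTheory.integral_congr_ae
    filter_upwards with ξ
    rw [inner_smul_right]
  -- Fubini for the left-hand side
  have hFubL : MeasureTheory.Integrable (Function.uncurry fun (x ξ : Rd d) =>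
      Complex.exp (-Complex.I * ((⟪x, ξ⟫ : ℝ) : ℂ))
        * (inner ℂ ((φa (x, ξ)) (mFT (⇑f₁) ξ)) (f₂ x) : ℂ))
      (MeasureTheory.volume.prod MeasureTheory.volume) := by
    refine MeasureTheory.Integrable.mono'
      (f₂.integrable.norm.mul_prod ((mFT_integrable f₁).norm.const_mul Ma)) ?_ ?_
    · apply Continuous.aestronglyMeasurable
      refine Continuous.mul ?_ ?_
      · exact Complex.continuous_exp.comp (continuous_const.mul
          (Complex.continuous_ofReal.comp (continuous_fst.inner continuous_snd)))
      · exact Continuous.inner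
          ((φa.continuous.comp (continuous_fst.prodMk continuous_snd)).clm_apply
            ((mFT_continuous f₁).comp continuous_snd))
          (f₂.continuous.comp continuous_fst)
    · filter_upwards with z
      rw [Function.uncurry, norm_mul, norm_exp_negI_mul, one_mul]
      calc ‖(inner ℂ ((φa (z.1, z.2)) (mFT (⇑f₁) z.2)) (f₂ z.1) : ℂ)‖
          ≤ ‖(φa (z.1, z.2)) (mFT (⇑f₁) z.2)‖ * ‖f₂ z.1‖ := norm_inner_le_norm _ _
        _ ≤ (Ma * ‖mFT (⇑f₁) z.2‖) * ‖f₂ z.1‖ := by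
            gcongr
            · exact le_trans ((φa (z.1, z.2)).le_opNorm _)
                (by gcongr; exact φa.norm_le_seminorm ℝ _)
        _ = ‖f₂ z.1‖ * (Ma * ‖mFT (⇑f₁) z.2‖) := by ring
  -- Fubini for the right-hand side
  have hFubR : MeasureTheory.Integrable (Function.uncurry fun (x ξ : Rd d) =>
      Complex.exp (Complex.I * ((⟪x, ξ⟫ : ℝ) : ℂ))
        * (inner ℂ (f₁ x) ((φg (x, ξ)) (mFT (⇑f₂) ξ)) : ℂ))
      (MeasureTheory.volume.prod MeasureTheory.volume) := by
    refine MeasureTheory.Integrable.mono'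
      (f₁.integrable.norm.mul_prod ((mFT_integrable f₂).norm.const_mul Mg)) ?_ ?_
    · apply Continuous.aestronglyMeasurable
      refine Continuous.mul ?_ ?_
      · exact Complex.continuous_exp.comp (continuous_const.mul
          (Complex.continuous_ofReal.comp (continuous_fst.inner continuous_snd)))
      · exact Continuous.inner (f₁.continuous.comp continuous_fst)
          ((φg.continuous.comp (continuous_fst.prodMk continuous_snd)).clm_apply
            ((mFT_continuous f₂).comp continuous_snd))
    · filter_upwards with z
      rw [Function.uncurry, norm_mul, norm_exp_I_mul, one_mul]
      calc ‖(inner ℂ (f₁ z.1) ((φg (z.1, z.2)) (mFT (⇑f₂) z.2)) : ℂ)‖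
          ≤ ‖f₁ z.1‖ * ‖(φg (z.1, z.2)) (mFT (⇑f₂) z.2)‖ := norm_inner_le_norm _ _
        _ ≤ ‖f₁ z.1‖ * (Mg * ‖mFT (⇑f₂) z.2‖) := by
            gcongr
            exact le_trans ((φg (z.1, z.2)).le_opNorm _)
              (by gcongr; exact φg.norm_le_seminorm ℝ _)
  have htrans : ∀ ξ μ : Rd d, ξ + (μ - ξ) = μ := fun ξ μ => by abel
  -- left-hand side chain
  have hL : L2inner (op (fun x ξ => φa (x, ξ)) (⇑f₁)) (⇑f₂)
      = cst d • ∫ ξ : Rd d, ∫ μ : Rd d,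
          (inner ℂ ((Asym φa (μ - ξ) ξ) (mFT (⇑f₁) ξ)) (mFT (⇑f₂) μ) : ℂ) := by
    calc L2inner (op (fun x ξ => φa (x, ξ)) (⇑f₁)) (⇑f₂)
        = ∫ x : Rd d, (inner ℂ (op (fun x ξ => φa (x, ξ)) (⇑f₁) x) (f₂ x) : ℂ) := rfl
      _ = ∫ x : Rd d, cst d • ∫ ξ : Rd d, Complex.exp (-Complex.I * ((⟪x, ξ⟫ : ℝ) : ℂ))
            * (inner ℂ ((φa (x, ξ)) (mFT (⇑f₁) ξ)) (f₂ x) : ℂ) :=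
          MeasureTheory.integral_congr_ae (Filter.Eventually.of_forall hL1)
      _ = cst d • ∫ x : Rd d, ∫ ξ : Rd d, Complex.exp (-Complex.I * ((⟪x, ξ⟫ : ℝ) : ℂ))
            * (inner ℂ ((φa (x, ξ)) (mFT (⇑f₁) ξ)) (f₂ x) : ℂ) :=
          MeasureTheory.integral_smul _ _
      _ = cst d • ∫ ξ : Rd d, ∫ x : Rd d, Complex.exp (-Complex.I * ((⟪x, ξ⟫ : ℝ) : ℂ))
            * (inner ℂ ((φa (x, ξ)) (mFT (⇑f₁) ξ)) (f₂ x) : ℂ) := by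
          rw [MeasureTheory.integral_integral_swap hFubL]
      _ = cst d • ∫ ξ : Rd d, ∫ η : Rd d,
            (inner ℂ ((Asym φa η ξ) (mFT (⇑f₁) ξ)) (mFT (⇑f₂) (ξ + η)) : ℂ) := by
          congr 1
          exact MeasureTheory.integral_congr_ae (Filter.Eventually.of_forall
            (fun ξ => key1 φa f₂ ξ (mFT (⇑f₁) ξ)))
      _ = cst d • ∫ ξ : Rd d, ∫ μ : Rd d,
            (inner ℂ ((Asym φa (μ - ξ) ξ) (mFT (⇑f₁) ξ)) (mFT (⇑f₂) μ) : ℂ) := by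
          congr 1
          apply MeasureTheory.integral_congr_ae
          filter_upwards with ξ
          rw [← MeasureTheory.integral_sub_right_eq_self (fun η : Rd d =>
            (inner ℂ ((Asym φa η ξ) (mFT (⇑f₁) ξ)) (mFT (⇑f₂) (ξ + η)) : ℂ)) ξ]
          simp only [htrans]
  -- right-hand side chain
  have hR : L2inner (⇑f₁) (op (fun x ξ => φg (x, ξ)) (⇑f₂))
      = cst d • ∫ ξ : Rd d, ∫ ζ : Rd d,
          (inner ℂ ((Asym φa (ξ - ζ) ζ) (mFT (⇑f₁) ζ)) (mFT (⇑f₂) ξ) : ℂ) := by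
    calc L2inner (⇑f₁) (op (fun x ξ => φg (x, ξ)) (⇑f₂))
        = ∫ x : Rd d, (inner ℂ (f₁ x) (op (fun x ξ => φg (x, ξ)) (⇑f₂) x) : ℂ) := rfl
      _ = ∫ x : Rd d, cst d • ∫ ξ : Rd d, Complex.exp (Complex.I * ((⟪x, ξ⟫ : ℝ) : ℂ))
            * (inner ℂ (f₁ x) ((φg (x, ξ)) (mFT (⇑f₂) ξ)) : ℂ) :=
          MeasureTheory.integral_congr_ae (Filter.Eventually.of_forall hR1)
      _ = cst d • ∫ x : Rd d, ∫ ξ : Rd d, Complex.exp (Complex.I * ((⟪x, ξ⟫ : ℝ) : ℂ))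
            * (inner ℂ (f₁ x) ((φg (x, ξ)) (mFT (⇑f₂) ξ)) : ℂ) :=
          MeasureTheory.integral_smul _ _
      _ = cst d • ∫ ξ : Rd d, ∫ x : Rd d, Complex.exp (Complex.I * ((⟪x, ξ⟫ : ℝ) : ℂ))
            * (inner ℂ (f₁ x) ((φg (x, ξ)) (mFT (⇑f₂) ξ)) : ℂ) := by
          rw [MeasureTheory.integral_integral_swap hFubR]
      _ = cst d • ∫ ξ : Rd d, ∫ η : Rd d,
            (inner ℂ (mFT (⇑f₁) (ξ + η)) ((Asym φg η ξ) (mFT (⇑f₂) ξ)) : ℂ) := by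
          congr 1
          exact MeasureTheory.integral_congr_ae (Filter.Eventually.of_forall
            (fun ξ => key2 φg f₁ ξ (mFT (⇑f₂) ξ)))
      _ = cst d • ∫ ξ : Rd d, ∫ η : Rd d,
            (inner ℂ ((Asym φa (-η) (η + ξ)) (mFT (⇑f₁) (ξ + η))) (mFT (⇑f₂) ξ) : ℂ) := by
          congr 1
          apply MeasureTheory.integral_congr_ae
          filter_upwards with ξ
          apply MeasureTheory.integral_congr_ae
          filter_upwards with η
          rw [hrelA η ξ, ContinuousLinearMap.adjoint_inner_right]
      _ = cst d • ∫ ξ : Rd d, ∫ ζ : Rd d,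
            (inner ℂ ((Asym φa (ξ - ζ) ζ) (mFT (⇑f₁) ζ)) (mFT (⇑f₂) ξ) : ℂ) := by
          congr 1
          apply MeasureTheory.integral_congr_ae
          filter_upwards with ξ
          rw [← MeasureTheory.integral_sub_right_eq_self (fun η : Rd d =>
            (inner ℂ ((Asym φa (-η) (η + ξ)) (mFT (⇑f₁) (ξ + η))) (mFT (⇑f₂) ξ) : ℂ)) ξ]
          simp only [neg_sub, sub_add_cancel, htrans]
  -- final Fubini swap
  obtain ⟨MA, hMA0, hMA⟩ := Asym_bound φa
  have hH : MeasureTheory.Integrable (Function.uncurry fun (ξ μ : Rd d) =>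
      (inner ℂ ((Asym φa (μ - ξ) ξ) (mFT (⇑f₁) ξ)) (mFT (⇑f₂) μ) : ℂ))
      (MeasureTheory.volume.prod MeasureTheory.volume) := by
    refine MeasureTheory.Integrable.mono'
      (((mFT_integrable f₁).norm.const_mul MA).mul_prod (mFT_integrable f₂).norm) ?_ ?_
    · apply Continuous.aestronglyMeasurable
      exact Continuous.inner
        ((((Asym_cont φa).comp ((continuous_snd.sub continuous_fst).prodMk
          continuous_fst)).clm_apply ((mFT_continuous f₁).comp continuous_fst)))
        ((mFT_continuous f₂).comp continuous_snd)
    · filter_upwards with z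
      rw [Function.uncurry]
      calc ‖(inner ℂ ((Asym φa (z.2 - z.1) z.1) (mFT (⇑f₁) z.1)) (mFT (⇑f₂) z.2) : ℂ)‖
          ≤ ‖(Asym φa (z.2 - z.1) z.1) (mFT (⇑f₁) z.1)‖ * ‖mFT (⇑f₂) z.2‖ :=
            norm_inner_le_norm _ _
        _ ≤ (MA * ‖mFT (⇑f₁) z.1‖) * ‖mFT (⇑f₂) z.2‖ := by
            gcongr
            exact le_trans ((Asym φa (z.2 - z.1) z.1).le_opNorm _)
              (by gcongr; exact hMA _ _)
  rw [hL, hR, MeasureTheory.integral_integral_swap hH]
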